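/- Let e₁, e₂ be the standard orthonormal basis of ℂ² and ρ_singlet = |ψ⟩⟨ψ| with ψ = (e₁⊗e₂ − e₂⊗e₁)/√2 the two-qubit singlet state on ℂ²⊗ℂ². The Hermitian operator T on (ℂ²)^{⊗3} defined by T = (1/2)|e₁⟩⟨e₁|⊗|e₂⟩⟨e₂|⊗|e₂⟩⟨e₂| + (1/2)|e₂⟩⟨e₂|⊗|e₁⟩⟨e₁|⊗|e₁⟩⟨e₁| − (1/4)|e₁⟩⟨e₂|⊗|e₂⟩⟨e₁|⊗I − (1/4)|e₂⟩⟨e₁|⊗|e₁⟩⟨e₂|⊗I − (1/4)|e₁⟩⟨e₂|⊗I⊗|e₂⟩⟨e₁| − (1/4)|e₂⟩⟨e₁|⊗I⊗|e₁⟩⟨e₂| is a 1×2-setting source operator for ρ_singlet, its eigenvalues are 0 (multiplicity 4), (1−√3)/4 (multiplicity 2) and (1+√3)/4 (multiplicity 2), and its trace norm equals √3. -/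

import Mathlib

open scoped Matrix Kronecker ComplexOrder

namespace Singlet

/-- The absolute value `√(Wᴴ W)` of a matrix. -/
noncomputable def matAbs {n : Type} [Fintype n] [DecidableEq n]
    (W : Matrix n n ℂ) : Matrix n n ℂ :=
  let hA := Matrix.posSemidef_conjTranspose_mul_self W
  (hA.1.eigenvectorUnitary : Matrix n n ℂ) *
    Matrix.diagonal ((↑) ∘ (Real.sqrt ∘ hA.1.eigenvalues)) *
    (star hA.1.eigenvectorUnitary : Matrix n n ℂ)

/-- The trace norm `‖W‖₁ := tr √(Wᴴ W)`. -/
noncomputable def traceNorm {n : Type} [Fintype n] [DecidableEq n]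
    (W : Matrix n n ℂ) : ℝ :=
  ((matAbs W).trace).re

/-- The standard orthonormal basis vectors `e₁, e₂` of `ℂ²`. -/
def e (i : Fin 2) : Fin 2 → ℂ := fun j => if j = i then 1 else 0

/-- The singlet vector `ψ = (e₁ ⊗ e₂ − e₂ ⊗ e₁)/√2`. -/
noncomputable def ψsinglet : Fin 2 × Fin 2 → ℂ := fun p =>
  (e 0 p.1 * e 1 p.2 - e 1 p.1 * e 0 p.2) / (Real.sqrt 2 : ℂ)

/-- The two-qubit singlet state `ρ_singlet = |ψ⟩⟨ψ|` on `ℂ² ⊗ ℂ²`. -/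
noncomputable def ρsinglet : Matrix (Fin 2 × Fin 2) (Fin 2 × Fin 2) ℂ :=
  Matrix.vecMulVec ψsinglet (star ψsinglet)

/-- The matrix units `|e_i⟩⟨e_j|` on `ℂ²`. -/
def E (i j : Fin 2) : Matrix (Fin 2) (Fin 2) ℂ := Matrix.single i j 1

/-- The `1×2`-setting source operator for the singlet, on `(ℂ²)^{⊗3}`. -/
noncomputable def Tsinglet : Matrix (Fin 2 × Fin 2 × Fin 2) (Fin 2 × Fin 2 × Fin 2) ℂ :=
  (2⁻¹ : ℂ) • (E 0 0 ⊗ₖ (E 1 1 ⊗ₖ E 1 1)) + (2⁻¹ : ℂ) • (E 1 1 ⊗ₖ (E 0 0 ⊗ₖ E 0 0))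
    - (4⁻¹ : ℂ) • (E 0 1 ⊗ₖ (E 1 0 ⊗ₖ 1)) - (4⁻¹ : ℂ) • (E 1 0 ⊗ₖ (E 0 1 ⊗ₖ 1))
    - (4⁻¹ : ℂ) • (E 0 1 ⊗ₖ (1 ⊗ₖ E 1 0)) - (4⁻¹ : ℂ) • (E 1 0 ⊗ₖ (1 ⊗ₖ E 0 1))

end Singlet

/-!
`T` is annihilated by `x (x - a) (x - b) = x³ - x²/2 - x/8` with `a, b = (1 ∓ √3)/4`, as one checks
on its `8 × 8` matrix in the computational basis, so its eigenvalues lie in `{0, a, b}`. If `a` and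
`b` occur `m` and `n` times, `tr T = 1` reads `(m + n) + (n - m)√3 = 4`, and since `√3` is
irrational, `m = n = 2`. The trace norm of a Hermitian matrix is the sum of the absolute values of
its eigenvalues, here `2|a| + 2|b| = √3`. The marginal conditions are a computation with Kronecker
products of matrix units.
-/

open Matrix Polynomial

namespace Matrix.IsHermitian

variable {n 𝕜 : Type*} [Fintype n] [DecidableEq n] [RCLike 𝕜] {A : Matrix n n 𝕜}

theorem trace_cfc (hA : A.IsHermitian) (f : ℝ → ℝ) :
    (cfc f A).trace = ∑ i, (f (hA.eigenvalues i) : 𝕜) := by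
  rw [hA.cfc_eq, IsHermitian.cfc, Unitary.conjStarAlgAut_apply, trace_mul_cycle,
    Unitary.coe_star_mul_self, one_mul, trace_diagonal]
  rfl

theorem eval_eigenvalues_eq_zero_of_aeval_eq_zero (hA : A.IsHermitian) {p : ℝ[X]}
    (hp : aeval A p = 0) (i : n) :
    p.eval (hA.eigenvalues i) = 0 := by
  have : Nonempty n := ⟨i⟩
  simpa [hp, spectrum.zero_eq] using
    spectrum.subset_polynomial_aeval A p ⟨_, hA.eigenvalues_mem_spectrum_real i, rfl⟩

end Matrix.IsHermitian

theorem Multiset.eq_replicate_add_replicate_add_replicate {α : Type*} [DecidableEq α]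
    {M : Multiset α} {a b c : α} (hab : a ≠ b) (hac : a ≠ c) (hbc : b ≠ c)
    (hM : ∀ x ∈ M, x = a ∨ x = b ∨ x = c) :
    M = replicate (M.count a) a + replicate (M.count b) b + replicate (M.count c) c := by
  ext x
  simp only [count_add, count_replicate]
  by_cases hxa : a = x
  · subst hxa; simp [hab.symm, hac.symm]
  by_cases hxb : b = x
  · subst hxb; simp [hab, hbc.symm]
  by_cases hxc : c = x
  · subst hxc; simp [hac, hbc]
  have hx : x ∉ M := fun hx => by rcases hM x hx with h | h | h <;> simp_all
  simp [count_eq_zero.mpr hx, hxa, hxb, hxc]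

namespace Singlet

theorem matAbs_eq_cfc {n : Type} [Fintype n] [DecidableEq n] (W : Matrix n n ℂ) :
    matAbs W = cfc Real.sqrt (Wᴴ * W) := by
  rw [(posSemidef_conjTranspose_mul_self W).1.cfc_eq, IsHermitian.cfc,
    Unitary.conjStarAlgAut_apply]
  rfl

theorem traceNorm_eq_sum_abs_eigenvalues {n : Type} [Fintype n] [DecidableEq n]
    {A : Matrix n n ℂ} (hA : A.IsHermitian) : traceNorm A = ∑ i, |hA.eigenvalues i| := by
  have hsq : Aᴴ * A = cfc (· ^ 2 : ℝ → ℝ) A := by rw [cfc_pow_id A 2, hA.eq, sq]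
  have habs : matAbs A = cfc (fun x : ℝ => |x|) A := by
    rw [matAbs_eq_cfc, hsq, ← cfc_comp Real.sqrt (· ^ 2) A]
    simp only [Function.comp_def, Real.sqrt_sq_eq_abs]
  rw [traceNorm, habs, hA.trace_cfc, Complex.re_sum]
  simp

theorem isHermitian_Tsinglet : Tsinglet.IsHermitian := by
  simp only [Tsinglet, IsHermitian, conjTranspose_add, conjTranspose_sub, conjTranspose_smul,
    conjTranspose_kronecker, conjTranspose_one, E, conjTranspose_single, star_one]
  norm_num
  abel

theorem ρsinglet_eq : ρsinglet =
    (2⁻¹ : ℂ) • (E 0 0 ⊗ₖ E 1 1 - E 0 1 ⊗ₖ E 1 0 - E 1 0 ⊗ₖ E 0 1 + E 1 1 ⊗ₖ E 0 0) := by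
  have h2 : ((√2 : ℂ))⁻¹ * (√2 : ℂ)⁻¹ = 2⁻¹ := by
    rw [← mul_inv, ← Complex.ofReal_mul, Real.mul_self_sqrt zero_le_two]
    simp
  ext ⟨a, b⟩ ⟨a', b'⟩
  fin_cases a <;> fin_cases b <;> fin_cases a' <;> fin_cases b' <;>
    simp [ρsinglet, ψsinglet, e, E, vecMulVec_apply, div_eq_mul_inv, h2]

theorem trace_Tsinglet_mul_kronecker_one (X₁ X₂ : Matrix (Fin 2) (Fin 2) ℂ) :
    (Tsinglet * (X₁ ⊗ₖ (X₂ ⊗ₖ (1 : Matrix (Fin 2) (Fin 2) ℂ)))).trace =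
      (ρsinglet * (X₁ ⊗ₖ X₂)).trace := by
  simp only [Tsinglet, ρsinglet_eq, add_mul, sub_mul, smul_mul_assoc, ← mul_kronecker_mul,
    trace_add, trace_sub, trace_smul, trace_kronecker, E, trace_single_mul, one_mul, trace_one]
  simp [trace_fin_two]
  ring

theorem trace_Tsinglet_mul_one_kronecker (X₁ X₂ : Matrix (Fin 2) (Fin 2) ℂ) :
    (Tsinglet * (X₁ ⊗ₖ ((1 : Matrix (Fin 2) (Fin 2) ℂ) ⊗ₖ X₂))).trace =
      (ρsinglet * (X₁ ⊗ₖ X₂)).trace := by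
  simp only [Tsinglet, ρsinglet_eq, add_mul, sub_mul, smul_mul_assoc, ← mul_kronecker_mul,
    trace_add, trace_sub, trace_smul, trace_kronecker, E, trace_single_mul, one_mul, trace_one]
  simp [trace_fin_two]
  ring

/-- Numbers the computational basis vector `|a b c⟩` of `(ℂ²)^{⊗3}` as `4a + 2b + c`. -/
def tripleIndex : Fin 2 × Fin 2 × Fin 2 ≃ Fin 8 :=
  (Equiv.prodCongr (Equiv.refl _) finProdFinEquiv).trans finProdFinEquiv

noncomputable def Tsinglet8 : Matrix (Fin 8) (Fin 8) ℝ :=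
  !![0, 0, 0, 0, 0, 0, 0, 0;
     0, 0, 0, 0, -1/4, 0, 0, 0;
     0, 0, 0, 0, -1/4, 0, 0, 0;
     0, 0, 0, 1/2, 0, -1/4, -1/4, 0;
     0, -1/4, -1/4, 0, 1/2, 0, 0, 0;
     0, 0, 0, -1/4, 0, 0, 0, 0;
     0, 0, 0, -1/4, 0, 0, 0, 0;
     0, 0, 0, 0, 0, 0, 0, 0]

theorem Tsinglet_eq_reindex :
    Tsinglet = reindexAlgEquiv ℝ ℂ tripleIndex.symm ((Algebra.ofId ℝ ℂ).mapMatrix Tsinglet8) := by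
  ext ⟨a, b, c⟩ ⟨a', b', c'⟩
  simp only [coe_reindexAlgEquiv, reindex_apply, submatrix_apply, Equiv.symm_symm,
    AlgHom.mapMatrix_apply, map_apply, Algebra.ofId_apply, Complex.coe_algebraMap]
  fin_cases a <;> fin_cases b <;> fin_cases c <;> fin_cases a' <;> fin_cases b' <;> fin_cases c' <;>
    simp [Tsinglet, E, tripleIndex, finProdFinEquiv, Tsinglet8, one_apply] <;> norm_num

theorem Tsinglet8_pow_three :
    Tsinglet8 ^ 3 = (2⁻¹ : ℝ) • Tsinglet8 ^ 2 + (8⁻¹ : ℝ) • Tsinglet8 := by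
  simp only [Tsinglet8, pow_succ, pow_zero, one_mul]
  norm_num [cons_mul, vecMul_cons, smul_cons, cons_add_cons, cons_zero_zero, ← zero_empty]

theorem aeval_Tsinglet :
    aeval Tsinglet (X ^ 3 - C 2⁻¹ * X ^ 2 - C 8⁻¹ * X : ℝ[X]) = 0 := by
  have h8 : aeval Tsinglet8 (X ^ 3 - C 2⁻¹ * X ^ 2 - C 8⁻¹ * X : ℝ[X]) = 0 := by
    simp only [map_sub, map_mul, aeval_X_pow, aeval_C, aeval_X, ← Algebra.smul_def,
      Tsinglet8_pow_three]
    abel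
  rw [Tsinglet_eq_reindex, aeval_algHom_apply, aeval_algHom_apply, h8, map_zero, map_zero]

theorem trace_Tsinglet : Tsinglet.trace = 1 := by
  simp [Tsinglet, E, trace_kronecker]
  norm_num

theorem eigenvalues_Tsinglet_eq_zero_or (hT : Tsinglet.IsHermitian) (i : Fin 2 × Fin 2 × Fin 2) :
    hT.eigenvalues i = 0 ∨ hT.eigenvalues i = (1 - √3) / 4 ∨ hT.eigenvalues i = (1 + √3) / 4 := by
  have hroot := hT.eval_eigenvalues_eq_zero_of_aeval_eq_zero aeval_Tsinglet i
  simp only [eval_sub, eval_mul, eval_pow, eval_C, eval_X] at hroot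
  have h3 : √3 ^ 2 = 3 := Real.sq_sqrt (by norm_num)
  have hfactor : hT.eigenvalues i * (hT.eigenvalues i - (1 - √3) / 4) *
      (hT.eigenvalues i - (1 + √3) / 4) = 0 := by
    linear_combination hroot - hT.eigenvalues i / 16 * h3
  simpa [sub_eq_zero, or_assoc] using hfactor

theorem eq_two_of_mul_add_mul_eq_one {m n : ℕ}
    (h : (m : ℝ) * ((1 - √3) / 4) + n * ((1 + √3) / 4) = 1) : m = 2 ∧ n = 2 := by
  have key : (((n : ℤ) - m : ℤ) : ℝ) * √3 = ((4 - m - n : ℤ) : ℝ) := by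
    push_cast
    linear_combination 4 * h
  have hirr : Irrational √3 := by simpa using Nat.prime_three.irrational_sqrt
  have hnm : (n : ℤ) - m = 0 := by
    by_contra hne
    exact (hirr.intCast_mul hne).ne_int _ key
  have hmn : (4 : ℤ) - m - n = 0 := by
    exact_mod_cast (show ((4 - m - n : ℤ) : ℝ) = 0 by rw [← key, hnm]; simp)
  omega

theorem map_eigenvalues_Tsinglet (hT : Tsinglet.IsHermitian) :
    Finset.univ.val.map hT.eigenvalues =
      Multiset.replicate 4 0 + Multiset.replicate 2 ((1 - √3) / 4) +
        Multiset.replicate 2 ((1 + √3) / 4) := by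
  set M := Finset.univ.val.map hT.eigenvalues
  have hs : 1 < √3 := Real.lt_sqrt_of_sq_lt (by norm_num)
  have hM := Multiset.eq_replicate_add_replicate_add_replicate (M := M)
    (a := 0) (b := (1 - √3) / 4) (c := (1 + √3) / 4)
    (by intro h; linarith) (by intro h; linarith) (by intro h; linarith)
    (fun x hx => by
      obtain ⟨i, -, rfl⟩ := Multiset.mem_map.mp hx
      exact eigenvalues_Tsinglet_eq_zero_or hT i)
  have hcard : M.count 0 + M.count ((1 - √3) / 4) + M.count ((1 + √3) / 4) = 8 := by
    simpa [M] using (congrArg Multiset.card hM).symm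
  have hsum : (M.count ((1 - √3) / 4) : ℝ) * ((1 - √3) / 4) +
      M.count ((1 + √3) / 4) * ((1 + √3) / 4) = 1 := by
    have htrace : M.sum = 1 := by
      rw [← Finset.sum_eq_multiset_sum]
      have h := hT.trace_eq_sum_eigenvalues.symm.trans trace_Tsinglet
      rwa [← RCLike.ofReal_sum, ← RCLike.ofReal_one, RCLike.ofReal_inj] at h
    rw [hM] at htrace
    simpa [Multiset.sum_replicate, nsmul_eq_mul] using htrace
  obtain ⟨ha, hb⟩ := eq_two_of_mul_add_mul_eq_one hsum
  rw [hM, ha, hb, show M.count 0 = 4 by omega]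

theorem traceNorm_Tsinglet : traceNorm Tsinglet = √3 := by
  have h1 : 1 ≤ √3 := Real.one_le_sqrt.mpr (by norm_num)
  have hsum : ∑ i, |isHermitian_Tsinglet.eigenvalues i| =
      ((Finset.univ.val.map isHermitian_Tsinglet.eigenvalues).map abs).sum := by
    rw [Multiset.map_map]; rfl
  rw [traceNorm_eq_sum_abs_eigenvalues isHermitian_Tsinglet, hsum, map_eigenvalues_Tsinglet]
  simp [abs_of_nonpos (by linarith : (1 - √3) / 4 ≤ 0),
    abs_of_nonneg (by positivity : 0 ≤ (1 + √3) / 4)]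
  ring

end Singlet

open Singlet in
/-- The operator `T` of Eq. (A22) is a Hermitian `1×2`-setting source operator for the
two-qubit singlet state, its eigenvalues are `0` (multiplicity 4), `(1−√3)/4`
(multiplicity 2) and `(1+√3)/4` (multiplicity 2), and its trace norm equals `√3`. -/
theorem singlet_source_operator :
    Tsinglet.IsHermitian ∧
      (∀ X₁ X₂ : Matrix (Fin 2) (Fin 2) ℂ,
        (Tsinglet * (X₁ ⊗ₖ (X₂ ⊗ₖ (1 : Matrix (Fin 2) (Fin 2) ℂ)))).trace
            = (ρsinglet * (X₁ ⊗ₖ X₂)).trace ∧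
        (Tsinglet * (X₁ ⊗ₖ ((1 : Matrix (Fin 2) (Fin 2) ℂ) ⊗ₖ X₂))).trace
            = (ρsinglet * (X₁ ⊗ₖ X₂)).trace) ∧
      (∃ hT : Tsinglet.IsHermitian,
        (Finset.univ.val.map hT.eigenvalues : Multiset ℝ) =
          Multiset.replicate 4 (0 : ℝ) +
            Multiset.replicate 2 ((1 - Real.sqrt 3) / 4) +
            Multiset.replicate 2 ((1 + Real.sqrt 3) / 4)) ∧
      traceNorm Tsinglet = Real.sqrt 3 :=
  ⟨isHermitian_Tsinglet,
    fun X₁ X₂ => ⟨trace_Tsinglet_mul_kronecker_one X₁ X₂, trace_Tsinglet_mul_one_kronecker X₁ X₂⟩,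
    ⟨isHermitian_Tsinglet, map_eigenvalues_Tsinglet isHermitian_Tsinglet⟩, traceNorm_Tsinglet⟩
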